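/- arXiv:quant-ph/0612010 — 6 statements merged into one kernel-verified Lean document; each statement's English description precedes it below -/
import Mathlib

section
/- Let μ be a probability measure on a product measurable space Ω₁ × Ω₂ with marginals μ₁ and μ₂, and let ν₁, ν₂ be probability measures on Ω₁ and Ω₂ respectively. Then KL(μ ‖ ν₁ ⊗ ν₂) = KL(μ₁ ‖ ν₁) + KL(μ₂ ‖ ν₂) + KL(μ ‖ μ₁ ⊗ μ₂). In particular the term KL(μ ‖ μ₁ ⊗ μ₂), the relative entropy of a state with respect to the product of its marginals (the mutual entropy), is the excess of KL(μ ‖ ν₁ ⊗ ν₂) over the sum of the marginal relative entropies. -/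
open MeasureTheory
open scoped Classical

/-- Kullback–Leibler divergence (relative entropy) of `μ` with respect to `ν`:
`∫ log (dμ/dν) dμ` when `μ ≪ ν` and the integrand is integrable, `+∞` otherwise. -/
noncomputable def klDiv {Ω : Type*} [MeasurableSpace Ω] (μ ν : Measure Ω) : EReal :=
  if μ ≪ ν ∧ Integrable (fun ω => Real.log (μ.rnDeriv ν ω).toReal) μ
  then ((∫ ω, Real.log (μ.rnDeriv ν ω).toReal ∂μ : ℝ) : EReal)
  else ⊤

/-!
When `μ ≪ ν₁ ⊗ ν₂`, the marginals satisfy `μᵢ ≪ νᵢ`, and `μ ≪ μ₁ ⊗ μ₂` because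
`μ₁ ⊗ μ₂` has the density `(dμ₁/dν₁)(x) (dμ₂/dν₂)(y)` with respect to `ν₁ ⊗ ν₂`, which is
positive `μ`-a.e. The chain rule for Radon–Nikodym derivatives then splits the log-likelihood
ratio `μ`-a.e. as
`log dμ/d(ν₁ ⊗ ν₂) = log (dμ₁/dν₁)(x) + log (dμ₂/dν₂)(y) + log dμ/d(μ₁ ⊗ μ₂)`,
and the `μ`-integrals of the three terms are the three divergences on the right.
Every log-likelihood ratio has an integrable negative part (`r log r ≥ r - 1`), so the left side
is integrable exactly when all three terms are, and the identity also holds when some term is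
`⊤`. If `μ ≪ ν₁ ⊗ ν₂` fails, so does one of `μ₁ ≪ ν₁`, `μ₂ ≪ ν₂`, `μ ≪ μ₁ ⊗ μ₂`, since
together they would give `μ ≪ μ₁ ⊗ μ₂ ≪ ν₁ ⊗ ν₂`.
-/

open Real
open scoped ENNReal

lemma Real.log_toReal_mul {a b : ℝ≥0∞} (ha₀ : a ≠ 0) (ha : a ≠ ∞) (hb₀ : b ≠ 0) (hb : b ≠ ∞) :
    log (a * b).toReal = log a.toReal + log b.toReal := by
  rw [ENNReal.toReal_mul, Real.log_mul (ENNReal.toReal_ne_zero.2 ⟨ha₀, ha⟩)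
    (ENNReal.toReal_ne_zero.2 ⟨hb₀, hb⟩)]

section IntegralOrTop

variable {α : Type*} [MeasurableSpace α] {μ : Measure α} {f g : α → ℝ}

/-- For `f` with integrable negative part this is the extended integral `∫ f⁺ - ∫ f⁻`. -/
noncomputable def integralOrTop (f : α → ℝ) (μ : Measure α) : EReal :=
  if Integrable f μ then ((∫ x, f x ∂μ : ℝ) : EReal) else ⊤

lemma integralOrTop_of_integrable (hf : Integrable f μ) :
    integralOrTop f μ = ((∫ x, f x ∂μ : ℝ) : EReal) :=
  if_pos hf

lemma integralOrTop_of_not_integrable (hf : ¬ Integrable f μ) : integralOrTop f μ = ⊤ :=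
  if_neg hf

lemma integralOrTop_ne_bot (f : α → ℝ) (μ : Measure α) : integralOrTop f μ ≠ ⊥ := by
  unfold integralOrTop
  split <;> simp

lemma integralOrTop_congr (h : f =ᵐ[μ] g) : integralOrTop f μ = integralOrTop g μ := by
  simp only [integralOrTop, integrable_congr h, integral_congr_ae h]

lemma integralOrTop_comp {β : Type*} [MeasurableSpace β] {φ : α → β} (hφ : AEMeasurable φ μ)
    {f : β → ℝ} (hf : AEStronglyMeasurable f (μ.map φ)) :
    integralOrTop (fun x => f (φ x)) μ = integralOrTop f (μ.map φ) := by
  simp only [integralOrTop, integrable_map_measure hf hφ, integral_map hφ hf, Function.comp_def]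

lemma MeasureTheory.Integrable.negPart_add (hf : AEStronglyMeasurable f μ)
    (hg : AEStronglyMeasurable g μ) (hf' : Integrable f⁻ μ) (hg' : Integrable g⁻ μ) :
    Integrable (f + g)⁻ μ := by
  refine (hf'.add hg').mono' (hf.add hg).negPart (ae_of_all _ fun x => ?_)
  change ‖(f x + g x)⁻‖ ≤ (f x)⁻ + (g x)⁻
  rw [Real.norm_of_nonneg (negPart_nonneg _), negPart_def]
  exact sup_le (by linarith [neg_le_negPart (f x), neg_le_negPart (g x)]) (by positivity)

lemma integrable_add_iff_of_integrable_negPart (hf : AEStronglyMeasurable f μ)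
    (hf' : Integrable f⁻ μ) (hg' : Integrable g⁻ μ) :
    Integrable (f + g) μ ↔ Integrable f μ ∧ Integrable g μ := by
  refine ⟨fun hfg => ?_, fun h => h.1.add h.2⟩
  have hf_int : Integrable f μ := by
    refine integrable_of_le_of_le hf (ae_of_all _ fun x => ?_) (ae_of_all _ fun x => ?_)
      hf'.neg (hfg.add hg')
    · exact neg_le.mp (neg_le_negPart (f x))
    · simp only [Pi.add_apply, Pi.negPart_apply]
      linarith [neg_le_negPart (g x)]
  exact ⟨hf_int, by simpa using hfg.sub hf_int⟩

lemma integralOrTop_add (hf : AEStronglyMeasurable f μ)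
    (hf' : Integrable f⁻ μ) (hg' : Integrable g⁻ μ) :
    integralOrTop (f + g) μ = integralOrTop f μ + integralOrTop g μ := by
  by_cases h : Integrable f μ ∧ Integrable g μ
  · obtain ⟨hf_int, hg_int⟩ := h
    rw [integralOrTop_of_integrable (hf_int.add hg_int), integralOrTop_of_integrable hf_int,
      integralOrTop_of_integrable hg_int, integral_add' hf_int hg_int, EReal.coe_add]
  · rw [integralOrTop_of_not_integrable
      ((integrable_add_iff_of_integrable_negPart hf hf' hg').not.2 h)]
    rcases not_and_or.1 h with hf_int | hg_int
    · rw [integralOrTop_of_not_integrable hf_int,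
        EReal.top_add_of_ne_bot (integralOrTop_ne_bot g μ)]
    · rw [integralOrTop_of_not_integrable hg_int,
        EReal.add_top_of_ne_bot (integralOrTop_ne_bot f μ)]

end IntegralOrTop

section LogLikelihoodRatio

variable {α : Type*} [MeasurableSpace α] {μ ν ρ : Measure α}

lemma klDiv_of_not_ac (h : ¬ μ ≪ ν) : klDiv μ ν = ⊤ :=
  if_neg fun h' => h h'.1

lemma klDiv_eq_integralOrTop (h : μ ≪ ν) : klDiv μ ν = integralOrTop (llr μ ν) μ := by
  by_cases hint : Integrable (llr μ ν) μ
  · exact (if_pos ⟨h, hint⟩).trans (integralOrTop_of_integrable hint).symm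
  · exact (if_neg fun h' => hint h'.2).trans (integralOrTop_of_not_integrable hint).symm

lemma klDiv_ne_bot (μ ν : Measure α) : klDiv μ ν ≠ ⊥ := by
  by_cases h : μ ≪ ν
  · exact klDiv_eq_integralOrTop h ▸ integralOrTop_ne_bot _ _
  · simp [klDiv_of_not_ac h]

lemma integrable_negPart_llr [SigmaFinite μ] [IsFiniteMeasure ν] (h : μ ≪ ν) :
    Integrable (llr μ ν)⁻ μ := by
  rw [← integrable_toReal_rnDeriv_mul_iff h]
  refine Integrable.of_bound
    ((Measure.measurable_rnDeriv μ ν).ennreal_toReal.aestronglyMeasurable.mul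
      (measurable_llr μ ν).aestronglyMeasurable.negPart) 1 (ae_of_all _ fun x => ?_)
  simp only [llr_def, Pi.negPart_apply]
  rw [Real.norm_of_nonneg (mul_nonneg ENNReal.toReal_nonneg (negPart_nonneg _)), negPart_def]
  set r := (μ.rnDeriv ν x).toReal
  have hr : 0 ≤ r := ENNReal.toReal_nonneg
  have hklFun : 0 ≤ r * log r + 1 - r := InformationTheory.klFun_nonneg hr
  rcases le_total (-log r) 0 with hlog | hlog
  · simp [max_eq_right hlog]
  · rw [max_eq_left hlog]
    nlinarith

lemma llr_ae_eq_llr_add_llr [SigmaFinite μ] [SigmaFinite ρ] [SigmaFinite ν]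
    (hμρ : μ ≪ ρ) (hρν : ρ ≪ ν) : llr μ ν =ᵐ[μ] llr μ ρ + llr ρ ν := by
  have hμν := hμρ.trans hρν
  filter_upwards [Measure.rnDeriv_pos hμρ, hμρ.ae_le (Measure.rnDeriv_ne_top μ ρ),
    hμρ.ae_le (Measure.rnDeriv_pos hρν), hμν.ae_le (Measure.rnDeriv_ne_top ρ ν),
    hμν.ae_le (Measure.rnDeriv_mul_rnDeriv (κ := ν) hμρ)] with x h₀ h₁ h₂ h₃ hx
  simp only [llr_def, Pi.add_apply]
  rw [← hx, Pi.mul_apply, Real.log_toReal_mul h₀.ne' h₁ h₂.ne' h₃]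

lemma MeasureTheory.Measure.AbsolutelyContinuous.withDensity_of_ae_ne_zero {f : α → ℝ≥0∞}
    (hμν : μ ≪ ν) (hf : AEMeasurable f ν) (hf₀ : ∀ᵐ x ∂μ, f x ≠ 0) :
    μ ≪ ν.withDensity f := by
  refine Measure.AbsolutelyContinuous.mk fun s hs hs₀ => ?_
  rw [withDensity_apply _ hs, lintegral_eq_zero_iff' hf.restrict, Filter.EventuallyEq,
    ae_restrict_iff' hs] at hs₀
  rw [measure_eq_zero_iff_ae_notMem]
  filter_upwards [hμν.ae_le hs₀, hf₀] with x hx hx₀ hxs using hx₀ (hx hxs)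

end LogLikelihoodRatio

section Prod

variable {α β : Type*} [MeasurableSpace α] [MeasurableSpace β]

protected lemma MeasureTheory.Measure.AbsolutelyContinuous.fst {ρ σ : Measure (α × β)}
    (h : ρ ≪ σ) : ρ.fst ≪ σ.fst :=
  h.map measurable_fst

protected lemma MeasureTheory.Measure.AbsolutelyContinuous.snd {ρ σ : Measure (α × β)}
    (h : ρ ≪ σ) : ρ.snd ≪ σ.snd :=
  h.map measurable_snd

variable {μ₁ ν₁ : Measure α} {μ₂ ν₂ : Measure β}
  [SigmaFinite μ₁] [SigmaFinite ν₁] [SigmaFinite μ₂] [SigmaFinite ν₂]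

lemma MeasureTheory.Measure.prod_eq_withDensity_rnDeriv (h₁ : μ₁ ≪ ν₁) (h₂ : μ₂ ≪ ν₂) :
    μ₁.prod μ₂ = (ν₁.prod ν₂).withDensity fun p => μ₁.rnDeriv ν₁ p.1 * μ₂.rnDeriv ν₂ p.2 := by
  conv_lhs => rw [← Measure.withDensity_rnDeriv_eq μ₁ ν₁ h₁,
    ← Measure.withDensity_rnDeriv_eq μ₂ ν₂ h₂]
  exact prod_withDensity (Measure.measurable_rnDeriv _ _) (Measure.measurable_rnDeriv _ _)

lemma MeasureTheory.Measure.rnDeriv_prod (h₁ : μ₁ ≪ ν₁) (h₂ : μ₂ ≪ ν₂) :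
    (μ₁.prod μ₂).rnDeriv (ν₁.prod ν₂) =ᵐ[ν₁.prod ν₂]
      fun p => μ₁.rnDeriv ν₁ p.1 * μ₂.rnDeriv ν₂ p.2 := by
  rw [Measure.prod_eq_withDensity_rnDeriv h₁ h₂]
  exact Measure.rnDeriv_withDensity _ (by fun_prop)

lemma llr_prod (h₁ : μ₁ ≪ ν₁) (h₂ : μ₂ ≪ ν₂) :
    llr (μ₁.prod μ₂) (ν₁.prod ν₂) =ᵐ[μ₁.prod μ₂] fun p => llr μ₁ ν₁ p.1 + llr μ₂ ν₂ p.2 := by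
  have hfst := Measure.quasiMeasurePreserving_fst (μ := μ₁) (ν := μ₂)
  have hsnd := Measure.quasiMeasurePreserving_snd (μ := μ₁) (ν := μ₂)
  filter_upwards [(h₁.prod h₂).ae_le (Measure.rnDeriv_prod h₁ h₂),
    hfst.ae (Measure.rnDeriv_pos h₁), hfst.ae (h₁.ae_le (Measure.rnDeriv_ne_top μ₁ ν₁)),
    hsnd.ae (Measure.rnDeriv_pos h₂), hsnd.ae (h₂.ae_le (Measure.rnDeriv_ne_top μ₂ ν₂))]
    with p hp h₁₀ h₁ h₂₀ h₂
  simp only [llr_def]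
  rw [hp, Real.log_toReal_mul h₁₀.ne' h₁ h₂₀.ne' h₂]

variable {ρ : Measure (α × β)} [IsFiniteMeasure ρ]

lemma MeasureTheory.Measure.absolutelyContinuous_fst_prod_snd (h : ρ ≪ ν₁.prod ν₂)
    (h₁ : ρ.fst ≪ ν₁) (h₂ : ρ.snd ≪ ν₂) : ρ ≪ ρ.fst.prod ρ.snd := by
  rw [Measure.prod_eq_withDensity_rnDeriv h₁ h₂]
  refine h.withDensity_of_ae_ne_zero (by fun_prop) ?_
  filter_upwards [ae_of_ae_map measurable_fst.aemeasurable (Measure.rnDeriv_pos h₁),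
    ae_of_ae_map measurable_snd.aemeasurable (Measure.rnDeriv_pos h₂)] with p hp₁ hp₂
  exact mul_ne_zero hp₁.ne' hp₂.ne'

lemma llr_ae_eq_llr_fst_add_llr_snd_add_llr_fst_prod_snd (h : ρ ≪ ν₁.prod ν₂)
    (h₁ : ρ.fst ≪ ν₁) (h₂ : ρ.snd ≪ ν₂) :
    llr ρ (ν₁.prod ν₂) =ᵐ[ρ] (fun p => llr ρ.fst ν₁ p.1) + (fun p => llr ρ.snd ν₂ p.2)
      + llr ρ (ρ.fst.prod ρ.snd) := by
  have hρ := Measure.absolutelyContinuous_fst_prod_snd h h₁ h₂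
  filter_upwards [llr_ae_eq_llr_add_llr hρ (h₁.prod h₂), hρ.ae_le (llr_prod h₁ h₂)]
    with p hp hprod
  rw [hp, Pi.add_apply, hprod, add_comm]
  rfl

end Prod

/-- `KL(μ ‖ ν₁ ⊗ ν₂) = KL(μ₁ ‖ ν₁) + KL(μ₂ ‖ ν₂) + KL(μ ‖ μ₁ ⊗ μ₂)`:
the mutual entropy `KL(μ ‖ μ₁ ⊗ μ₂)` of a state with respect to the product of its
marginals is the excess of `KL(μ ‖ ν₁ ⊗ ν₂)` over the sum of the marginal relative
entropies. -/
theorem klDiv_prod_decomposition_mutual {Ω₁ Ω₂ : Type*}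
    [MeasurableSpace Ω₁] [MeasurableSpace Ω₂]
    (μ : Measure (Ω₁ × Ω₂)) (ν₁ : Measure Ω₁) (ν₂ : Measure Ω₂)
    [IsProbabilityMeasure μ] [IsProbabilityMeasure ν₁] [IsProbabilityMeasure ν₂] :
    klDiv μ (ν₁.prod ν₂)
      = klDiv μ.fst ν₁ + klDiv μ.snd ν₂ + klDiv μ (μ.fst.prod μ.snd) := by
  by_cases hac : μ ≪ ν₁.prod ν₂
  swap
  · have : ¬ (μ.fst ≪ ν₁ ∧ μ.snd ≪ ν₂ ∧ μ ≪ μ.fst.prod μ.snd) :=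
      fun ⟨h₁, h₂, h⟩ => hac (h.trans (h₁.prod h₂))
    simp only [not_and_or] at this
    rcases this with h | h | h <;> simp [klDiv_of_not_ac hac, klDiv_of_not_ac h, klDiv_ne_bot]
  have h₁ : μ.fst ≪ ν₁ := by simpa using hac.fst
  have h₂ : μ.snd ≪ ν₂ := by simpa using hac.snd
  have hμprod := Measure.absolutelyContinuous_fst_prod_snd hac h₁ h₂
  have hA_meas : AEStronglyMeasurable (fun p : Ω₁ × Ω₂ => llr μ.fst ν₁ p.1) μ :=
    ((measurable_llr _ _).comp measurable_fst).aestronglyMeasurable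
  have hB_meas : AEStronglyMeasurable (fun p : Ω₁ × Ω₂ => llr μ.snd ν₂ p.2) μ :=
    ((measurable_llr _ _).comp measurable_snd).aestronglyMeasurable
  have hA : Integrable (fun p : Ω₁ × Ω₂ => llr μ.fst ν₁ p.1)⁻ μ :=
    (integrable_negPart_llr h₁).comp_measurable measurable_fst
  have hB : Integrable (fun p : Ω₁ × Ω₂ => llr μ.snd ν₂ p.2)⁻ μ :=
    (integrable_negPart_llr h₂).comp_measurable measurable_snd
  rw [klDiv_eq_integralOrTop hac,
    integralOrTop_congr (llr_ae_eq_llr_fst_add_llr_snd_add_llr_fst_prod_snd hac h₁ h₂),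
    integralOrTop_add (hA_meas.add hB_meas) (hA.negPart_add hA_meas hB_meas hB)
      (integrable_negPart_llr hμprod),
    integralOrTop_add hA_meas hA hB, klDiv_eq_integralOrTop h₁, klDiv_eq_integralOrTop h₂,
    klDiv_eq_integralOrTop hμprod,
    integralOrTop_comp measurable_fst.aemeasurable (measurable_llr _ _).aestronglyMeasurable,
    integralOrTop_comp measurable_snd.aemeasurable (measurable_llr _ _).aestronglyMeasurable]
  rfl
end

section
/- Let μ and ν be probability measures on a measurable space Ω₁ and let κ be a Markov kernel from Ω₁ to a measurable space Ω₂. Then KL(μ.bind κ ‖ ν.bind κ) ≤ KL(μ ‖ ν), i.e. relative entropy does not increase under the action of a channel (Markov kernel). -/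
open MeasureTheory
open scoped Classical

/-! Mathlib's `InformationTheory.klDiv` is `ℝ≥0∞`-valued and adds the correction term
`ν(univ) - μ(univ)`. Between measures of equal finite mass that term vanishes and Gibbs'
inequality makes the `ENNReal.ofReal` harmless, so the two divergences agree. The theorem is then
Mathlib's data processing inequality: `κ ∘ₘ μ` is the second marginal of `μ ⊗ₘ κ`, a pushforward
cannot increase the divergence, and by the chain rule `KL(μ ⊗ₘ κ ‖ ν ⊗ₘ κ) = KL(μ ‖ ν)`. -/

theorem klDiv_eq_coe_informationTheory_klDiv {Ω : Type*} [MeasurableSpace Ω]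
    {μ ν : Measure Ω} [IsFiniteMeasure μ] [IsFiniteMeasure ν] (h_univ : μ Set.univ = ν Set.univ) :
    klDiv μ ν = (InformationTheory.klDiv μ ν : EReal) := by
  by_cases h : μ ≪ ν ∧ Integrable (llr μ ν) μ
  · obtain ⟨hμν, h_int⟩ := h
    have h_real_univ : ν.real Set.univ = μ.real Set.univ := by simp [measureReal_def, h_univ]
    have h_nonneg := InformationTheory.integral_llr_add_sub_measure_univ_nonneg hμν h_int
    rw [h_real_univ, add_sub_cancel_right] at h_nonneg
    rw [klDiv, ← llr_def, if_pos ⟨hμν, h_int⟩,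
      InformationTheory.klDiv_of_ac_of_integrable hμν h_int, h_real_univ, add_sub_cancel_right,
      EReal.coe_ennreal_ofReal, max_eq_left h_nonneg]
  · rw [klDiv, ← llr_def, if_neg h,
      InformationTheory.klDiv_eq_top_iff.mpr fun hμν h_int ↦ h ⟨hμν, h_int⟩, EReal.coe_ennreal_top]

/-- Uhlmann monotonicity (classical case): relative entropy does not increase under the
action of a channel (Markov kernel): `KL(μ ∘ κ ‖ ν ∘ κ) ≤ KL(μ ‖ ν)`. -/
theorem klDiv_bind_le {Ω₁ Ω₂ : Type*} [MeasurableSpace Ω₁] [MeasurableSpace Ω₂]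
    (μ ν : Measure Ω₁) [IsProbabilityMeasure μ] [IsProbabilityMeasure ν]
    (κ : ProbabilityTheory.Kernel Ω₁ Ω₂) [ProbabilityTheory.IsMarkovKernel κ] :
    klDiv (μ.bind κ) (ν.bind κ) ≤ klDiv μ ν := by
  rw [klDiv_eq_coe_informationTheory_klDiv (by simp),
    klDiv_eq_coe_informationTheory_klDiv (by simp)]
  exact EReal.coe_ennreal_le_coe_ennreal_iff.mpr (InformationTheory.klDiv_comp_right_le μ ν κ)
end

section
/- Let A be a positive definite Hermitian matrix in Matrix (Fin d) (Fin d) ℂ. Then its functional-calculus logarithm has the integral representation log A = ∫₀^∞ ( (1+t)⁻¹ • 1 − (t • 1 + A)⁻¹ ) dt, where 1 denotes the identity matrix, the inverse is the matrix inverse, and the integral is a Bochner integral of matrix-valued functions over (0, ∞). -/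
/-!
The integrand is `cfc (fun x ↦ (1 + t)⁻¹ - (t + x)⁻¹) A`, and because the spectrum of a matrix
is finite, `cfc` commutes with integration in the parameter `t`. Everything thus reduces to the
scalar identity `∫₀^∞ ((1 + t)⁻¹ - (t + λ)⁻¹) dt = log λ` for `λ > 0`, whose antiderivative
`log (1 + t) - log (t + λ)` tends to `0` at infinity.
-/

open Matrix
open scoped Classical ComplexOrder

variable {d : ℕ}

/-- Functional-calculus logarithm of a Hermitian matrix: for `A = U diag(λᵢ) U*` with `U`
unitary and `λᵢ` the (real) eigenvalues, `matLog A = U diag(ln λᵢ) U*`. (Junk value `0`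
if `A` is not Hermitian.) -/
noncomputable def matLog (A : Matrix (Fin d) (Fin d) ℂ) : Matrix (Fin d) (Fin d) ℂ :=
  if h : A.IsHermitian then
    (h.eigenvectorUnitary : Matrix (Fin d) (Fin d) ℂ) *
      Matrix.diagonal (fun i => (Real.log (h.eigenvalues i) : ℂ)) *
      star (h.eigenvectorUnitary : Matrix (Fin d) (Fin d) ℂ)
  else 0


attribute [local instance] Matrix.normedAddCommGroup Matrix.normedSpace

open MeasureTheory Set Filter Topology

namespace Real

lemma hasDerivAt_log_one_add_sub_log_add {l t : ℝ} (hl : 0 < l) (ht : 0 ≤ t) :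
    HasDerivAt (fun s ↦ log (1 + s) - log (s + l)) ((1 + t)⁻¹ - (t + l)⁻¹) t := by
  have h1 := ((hasDerivAt_id t).const_add 1).log (by positivity)
  have h2 := ((hasDerivAt_id t).add_const l).log (by positivity)
  simpa using h1.fun_sub h2

lemma tendsto_log_one_add_sub_log_add (l : ℝ) :
    Tendsto (fun s ↦ log (1 + s) - log (s + l)) atTop (𝓝 0) := by
  have h := (tendsto_log_comp_add_sub_log 1).sub (tendsto_log_comp_add_sub_log l)
  rw [sub_zero] at h
  refine h.congr fun s ↦ ?_
  rw [add_comm s 1]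
  ring

-- The integrand has the constant sign of `l - 1`, so integrability follows from the limit.
lemma integrableOn_inv_one_add_sub_inv_add {l : ℝ} (hl : 0 < l) :
    IntegrableOn (fun t ↦ (1 + t)⁻¹ - (t + l)⁻¹) (Ioi 0) := by
  have hderiv x (hx : x ∈ Ici (0 : ℝ)) := hasDerivAt_log_one_add_sub_log_add hl hx
  rcases le_total 1 l with h | h
  · refine integrableOn_Ioi_deriv_of_nonneg' hderiv (fun x hx ↦ ?_)
      (tendsto_log_one_add_sub_log_add l)
    exact sub_nonneg.2 (inv_anti₀ (by linarith [mem_Ioi.1 hx]) (by linarith))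
  · refine integrableOn_Ioi_deriv_of_nonpos' hderiv (fun x hx ↦ ?_)
      (tendsto_log_one_add_sub_log_add l)
    exact sub_nonpos.2 (inv_anti₀ (by linarith [mem_Ioi.1 hx]) (by linarith))

lemma integral_inv_one_add_sub_inv_add {l : ℝ} (hl : 0 < l) :
    ∫ t in Ioi 0, ((1 + t)⁻¹ - (t + l)⁻¹) = log l := by
  rw [integral_Ioi_of_hasDerivAt_of_tendsto' (fun x hx ↦ hasDerivAt_log_one_add_sub_log_add hl hx)
    (integrableOn_inv_one_add_sub_inv_add hl) (tendsto_log_one_add_sub_log_add l)]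
  simp

end Real

namespace Matrix

variable {n 𝕜 : Type*} [RCLike 𝕜] [Fintype n] [DecidableEq n] {A : Matrix n n 𝕜}

lemma PosDef.spectrum_real_pos (hA : A.PosDef) : ∀ x ∈ spectrum ℝ A, 0 < x := by
  rw [hA.1.spectrum_real_eq_range_eigenvalues]
  rintro _ ⟨i, rfl⟩
  exact hA.eigenvalues_pos i

namespace IsHermitian

lemma cfc_eq_sum_smul (hA : A.IsHermitian) (f : ℝ → ℝ) :
    cfc f A = ∑ i, (f (hA.eigenvalues i) : 𝕜) •
      Unitary.conjStarAlgAut 𝕜 _ hA.eigenvectorUnitary (single i i 1) := by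
  simp_rw [hA.cfc_eq, IsHermitian.cfc, ← sum_single_eq_diagonal, map_sum, ← map_smul, smul_single,
    smul_eq_mul, mul_one, Function.comp_apply]

lemma integral_cfc {X : Type*} [MeasurableSpace X] {μ : Measure X} (hA : A.IsHermitian)
    (f : X → ℝ → ℝ) (hf : ∀ r ∈ spectrum ℝ A, Integrable (f · r) μ) :
    ∫ x, cfc (f x) A ∂μ = cfc (fun r ↦ ∫ x, f x r ∂μ) A := by
  have hf_ofReal i := (hf _ (hA.eigenvalues_mem_spectrum_real i)).ofReal (𝕜 := 𝕜)
  simp_rw [hA.cfc_eq_sum_smul]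
  rw [integral_finsetSum _ fun i _ ↦ (hf_ofReal i).smul_const _]
  simp_rw [integral_smul_const, integral_ofReal]

lemma inv_smul_one_add_eq_cfc (hA : A.IsHermitian) {s : ℝ}
    (hs : ∀ x ∈ spectrum ℝ A, s + x ≠ 0) :
    (s • 1 + A)⁻¹ = cfc (fun x ↦ (s + x)⁻¹) A := by
  rw [cfc_inv (fun x ↦ s + x) A hs, cfc_const_add s (fun x ↦ x) A, cfc_id' ℝ A,
    Algebra.algebraMap_eq_smul_one, nonsing_inv_eq_ringInverse]

end IsHermitian

lemma PosDef.inv_one_add_smul_one_sub_inv_eq_cfc (hA : A.PosDef) {t : ℝ} (ht : 0 ≤ t) :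
    (1 + t)⁻¹ • (1 : Matrix n n 𝕜) - (t • 1 + A)⁻¹ = cfc (fun x ↦ (1 + t)⁻¹ - (t + x)⁻¹) A := by
  have hpos := hA.spectrum_real_pos
  rw [hA.1.inv_smul_one_add_eq_cfc fun x hx ↦ by linarith [hpos x hx],
    cfc_sub (fun _ ↦ (1 + t)⁻¹) _ A (hg := A.finite_real_spectrum.continuousOn _),
    cfc_const (1 + t)⁻¹ A hA.1.isSelfAdjoint, Algebra.algebraMap_eq_smul_one]

end Matrix

lemma matLog_eq_cfc {A : Matrix (Fin d) (Fin d) ℂ} (hA : A.IsHermitian) :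
    matLog A = cfc Real.log A := by
  rw [matLog, dif_pos hA, hA.cfc_eq, IsHermitian.cfc, Unitary.conjStarAlgAut_apply]
  rfl

/-- Integral representation of the operator logarithm: for a positive definite Hermitian
matrix `A`, `log A = ∫₀^∞ ((1+t)⁻¹ • 1 − (t • 1 + A)⁻¹) dt` (Bochner integral over
`(0,∞)`). -/
theorem matLog_eq_integral (d : ℕ) (A : Matrix (Fin d) (Fin d) ℂ) (hA : A.PosDef) :
    matLog A
      = ∫ t in Set.Ioi (0 : ℝ),
          ((1 + t)⁻¹ • (1 : Matrix (Fin d) (Fin d) ℂ)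
            - (t • (1 : Matrix (Fin d) (Fin d) ℂ) + A)⁻¹) := by
  have hpos := hA.spectrum_real_pos
  calc matLog A = cfc Real.log A := matLog_eq_cfc hA.1
    _ = cfc (fun x ↦ ∫ t in Ioi 0, ((1 + t)⁻¹ - (t + x)⁻¹)) A :=
      cfc_congr fun x hx ↦ (Real.integral_inv_one_add_sub_inv_add (hpos x hx)).symm
    _ = ∫ t in Ioi 0, cfc (fun x ↦ (1 + t)⁻¹ - (t + x)⁻¹) A :=
      (hA.1.integral_cfc _ fun x hx ↦ Real.integrableOn_inv_one_add_sub_inv_add (hpos x hx)).symm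
    _ = _ := setIntegral_congr_fun measurableSet_Ioi fun t ht ↦
      (hA.inv_one_add_smul_one_sub_inv_eq_cfc (le_of_lt ht)).symm
end

section
/- Let A be a positive definite Hermitian matrix in Matrix (Fin d) (Fin d) ℂ. Then ∫₀^∞ (u • 1 + A)⁻¹ * A * (u • 1 + A)⁻¹ du = 1, where 1 denotes the identity matrix and the integral is a Bochner integral of matrix-valued functions over (0, ∞). -/
/-!
Diagonalise `A = U diag(λ) U*`. Then `u • 1 + A = U diag(u + λ) U*`, so the integrand is
`U diag(λᵢ / (u + λᵢ)²) U*`. Conjugation by `U` is a linear equivalence of a finite-dimensional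
space, hence commutes with the Bochner integral, and the integral of a diagonal matrix is taken
entrywise. Each entry is `∫₀^∞ λ / (u + λ)² du = [-λ / (u + λ)]₀^∞ = 1`, so the integral is
`U 1 U* = 1`.
-/

open Matrix
open scoped Classical ComplexOrder

variable {d : ℕ}

open MeasureTheory Set Filter Topology Unitary

theorem hasDerivAt_neg_div_add (c x : ℝ) (h : x + c ≠ 0) :
    HasDerivAt (fun u : ℝ => -c / (u + c)) (c / (x + c) ^ 2) x := by
  have := (((hasDerivAt_id' x).add_const c).inv h).const_mul (-c)
  rw [show c / (x + c) ^ 2 = -c * (-1 / (x + c) ^ 2) by ring]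
  simpa only [div_eq_mul_inv, Pi.inv_apply] using this

theorem integrableOn_Ioi_div_add_sq_and_integral_eq_one {c : ℝ} (hc : 0 < c) :
    IntegrableOn (fun u : ℝ => c / (u + c) ^ 2) (Ioi 0) ∧
      ∫ u in Ioi (0 : ℝ), c / (u + c) ^ 2 = 1 := by
  have hderiv : ∀ x ∈ Ici (0 : ℝ),
      HasDerivAt (fun u : ℝ => -c / (u + c)) (c / (x + c) ^ 2) x :=
    fun x hx => hasDerivAt_neg_div_add c x (by linarith [mem_Ici.mp hx])
  have hnonneg : ∀ x ∈ Ioi (0 : ℝ), 0 ≤ c / (x + c) ^ 2 := fun x _ => by positivity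
  have hlim : Tendsto (fun u : ℝ => -c / (u + c)) atTop (𝓝 0) :=
    tendsto_const_nhds.div_atTop (tendsto_atTop_add_const_right _ c tendsto_id)
  refine ⟨integrableOn_Ioi_deriv_of_nonneg' hderiv hnonneg hlim, ?_⟩
  rw [integral_Ioi_of_hasDerivAt_of_nonneg' hderiv hnonneg hlim]
  field_simp
  simp

namespace Matrix

theorem inv_conjStarAlgAut_diagonal {n K : Type*} [Fintype n] [DecidableEq n] [Field K]
    [StarRing K] (U : unitary (Matrix n n K)) {v : n → K} (hv : ∀ i, v i ≠ 0) :
    (conjStarAlgAut K _ U (diagonal v))⁻¹ = conjStarAlgAut K _ U (diagonal v⁻¹) := by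
  refine inv_eq_left_inv ?_
  rw [← map_mul, diagonal_mul_diagonal, ← map_one (conjStarAlgAut K _ U), ← diagonal_one]
  congr 2 with i
  exact inv_mul_cancel₀ (hv i)

variable {n 𝕜 : Type*} [Fintype n] [DecidableEq n] [RCLike 𝕜]

theorem smul_one_add_conjStarAlgAut_diagonal (U : unitary (Matrix n n 𝕜)) (u : ℝ)
    (lam : n → ℝ) :
    u • 1 + conjStarAlgAut 𝕜 _ U (diagonal (RCLike.ofReal ∘ lam)) =
      conjStarAlgAut 𝕜 _ U (diagonal fun i => ((u + lam i : ℝ) : 𝕜)) := by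
  have hone : conjStarAlgAut 𝕜 _ U (u • 1) = u • 1 := by simp
  rw [← hone, ← map_add, RCLike.real_smul_eq_coe_smul (K := 𝕜), smul_one_eq_diagonal,
    diagonal_add]
  congr 2 with i
  simp

theorem inv_smul_one_add_mul_self_mul_inv_conjStarAlgAut_diagonal (U : unitary (Matrix n n 𝕜))
    {u : ℝ} {lam : n → ℝ} (hu : ∀ i, u + lam i ≠ 0) :
    (u • 1 + conjStarAlgAut 𝕜 _ U (diagonal (RCLike.ofReal ∘ lam)))⁻¹ *
        conjStarAlgAut 𝕜 _ U (diagonal (RCLike.ofReal ∘ lam)) *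
        (u • 1 + conjStarAlgAut 𝕜 _ U (diagonal (RCLike.ofReal ∘ lam)))⁻¹ =
      conjStarAlgAut 𝕜 _ U (diagonal fun i => ((lam i / (u + lam i) ^ 2 : ℝ) : 𝕜)) := by
  have hne (i : n) : ((u + lam i : ℝ) : 𝕜) ≠ 0 := RCLike.ofReal_ne_zero.mpr (hu i)
  rw [smul_one_add_conjStarAlgAut_diagonal, inv_conjStarAlgAut_diagonal U hne, ← map_mul,
    ← map_mul, diagonal_mul_diagonal, diagonal_mul_diagonal]
  congr 2 with i
  have := hne i
  simp only [Pi.inv_apply, Function.comp_apply] at this ⊢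
  push_cast at this ⊢
  field_simp

end Matrix

attribute [local instance] Matrix.normedAddCommGroup Matrix.normedSpace

theorem MeasureTheory.integral_diagonal {X n 𝕜 : Type*} [MeasurableSpace X] {μ : Measure X}
    [Fintype n] [DecidableEq n] [RCLike 𝕜] {g : X → n → 𝕜}
    (hg : ∀ i, Integrable (g · i) μ) :
    ∫ x, diagonal (g x) ∂μ = diagonal fun i => ∫ x, g x i ∂μ :=
  ((diagonalLinearMap n 𝕜 𝕜).toContinuousLinearMap.integral_comp_comm
    (Integrable.of_eval hg)).trans (congrArg diagonal (funext (eval_integral hg)))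

/-- For a positive definite Hermitian matrix `A`,
`∫₀^∞ (u•1+A)⁻¹ A (u•1+A)⁻¹ du = 1` (Bochner integral over `(0,∞)`). -/
theorem integral_resolvent_mul_self_eq_one (d : ℕ) (A : Matrix (Fin d) (Fin d) ℂ)
    (hA : A.PosDef) :
    (∫ u in Set.Ioi (0 : ℝ),
        (u • (1 : Matrix (Fin d) (Fin d) ℂ) + A)⁻¹ * A
          * (u • (1 : Matrix (Fin d) (Fin d) ℂ) + A)⁻¹)
      = (1 : Matrix (Fin d) (Fin d) ℂ) := by
  set U := hA.isHermitian.eigenvectorUnitary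
  set lam := hA.isHermitian.eigenvalues
  have hpointwise : ∀ u ∈ Ioi (0 : ℝ), (u • (1 : Matrix (Fin d) (Fin d) ℂ) + A)⁻¹ * A
      * (u • (1 : Matrix (Fin d) (Fin d) ℂ) + A)⁻¹ =
      conjStarAlgAut ℂ _ U (diagonal fun i => ((lam i / (u + lam i) ^ 2 : ℝ) : ℂ)) := by
    intro u hu
    conv_lhs => rw [hA.isHermitian.spectral_theorem]
    exact inv_smul_one_add_mul_self_mul_inv_conjStarAlgAut_diagonal U
      fun i => (add_pos hu (hA.eigenvalues_pos i)).ne'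
  have hscalar (i : Fin d) : IntegrableOn (fun u : ℝ => lam i / (u + lam i) ^ 2) (Ioi 0) ∧
      ∫ u in Ioi (0 : ℝ), lam i / (u + lam i) ^ 2 = 1 :=
    integrableOn_Ioi_div_add_sq_and_integral_eq_one (hA.eigenvalues_pos i)
  rw [setIntegral_congr_fun measurableSet_Ioi hpointwise]
  calc _ = conjStarAlgAut ℂ _ U
        (∫ u in Ioi (0 : ℝ), diagonal fun i => ((lam i / (u + lam i) ^ 2 : ℝ) : ℂ)) :=
        (conjStarAlgAut ℂ _ U).toAlgEquiv.toLinearEquiv.toContinuousLinearEquiv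
          |>.integral_comp_comm _
    _ = 1 := by
      rw [integral_diagonal (g := fun u i => ((lam i / (u + lam i) ^ 2 : ℝ) : ℂ))
        fun i => (hscalar i).1.ofReal]
      simp only [integral_complex_ofReal, hscalar, Complex.ofReal_one, diagonal_one, map_one]
end

section
/- Let η be a positive definite Hermitian matrix and A a Hermitian matrix in Matrix (Fin d) (Fin d) ℂ. Then ∫₀^∞ Tr( (u•1+η)⁻¹ A (u•1+η)⁻¹ A ) du − ∫₀^∞ Tr( η (u•1+η)⁻² A (u•1+η)⁻¹ A ) du = (1/2) ∫₀^∞ Tr( (u•1+η)⁻¹ A (u•1+η)⁻¹ A ) du, where 1 denotes the identity matrix, (u•1+η)⁻² = ((u•1+η)⁻¹)², and all integrals are over (0, ∞) and converge. -/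
/-
Diagonalise `η = U diag(λ) U*` and put `B = U* A U`. Both traces become double sums
`∑ᵢⱼ Bᵢⱼ Bⱼᵢ k(λᵢ, λⱼ)` with scalar kernels `g(a, b) = ∫₀^∞ (u + a)⁻¹ (u + b)⁻¹ du` and
`f(a, b) = ∫₀^∞ a (u + a)⁻² (u + b)⁻¹ du`. Integrating by parts against `u (u + a)⁻¹ (u + b)⁻¹`,
which vanishes at `0` and at `∞`, gives `f(a, b) + f(b, a) = g(a, b)`; since the weights
`Bᵢⱼ Bⱼᵢ` are symmetric in `i, j`, the second trace integral is half the first.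
-/

open Matrix MeasureTheory Set Filter Topology
open scoped ComplexOrder

namespace Matrix

variable {n 𝕜 : Type*} [Fintype n] [DecidableEq n] [RCLike 𝕜]

theorem trace_diagonal_mul_mul_diagonal_mul (r s : n → 𝕜) (B C : Matrix n n 𝕜) :
    (diagonal r * B * diagonal s * C).trace = ∑ i, ∑ j, r i * s j * (B i j * C j i) := by
  simp only [trace, diag, mul_apply (N := C), mul_diagonal, diagonal_mul]
  exact Finset.sum_congr rfl fun i _ => Finset.sum_congr rfl fun j _ => by ring

namespace IsHermitian

variable {η : Matrix n n 𝕜}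

noncomputable def inEigenbasis (hη : η.IsHermitian) (A : Matrix n n 𝕜) : Matrix n n 𝕜 :=
  star (hη.eigenvectorUnitary : Matrix n n 𝕜) * A * (hη.eigenvectorUnitary : Matrix n n 𝕜)

theorem continuousOn_spectrum (hη : η.IsHermitian) (f : ℝ → ℝ) :
    ContinuousOn f (spectrum ℝ η) :=
  (hη.spectrum_real_eq_range_eigenvalues ▸ finite_range _ : (spectrum ℝ η).Finite).continuousOn f

theorem trace_cfc_mul_cfc_mul (hη : η.IsHermitian) (f g : ℝ → ℝ) (A : Matrix n n 𝕜) :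
    (cfc f η * A * cfc g η * A).trace =
      ∑ i, ∑ j, (f (hη.eigenvalues i) * g (hη.eigenvalues j)) •
        (hη.inEigenbasis A i j * hη.inEigenbasis A j i) := by
  set U : Matrix n n 𝕜 := (hη.eigenvectorUnitary : Matrix n n 𝕜)
  set Df : Matrix n n 𝕜 := diagonal (RCLike.ofReal ∘ f ∘ hη.eigenvalues)
  set Dg : Matrix n n 𝕜 := diagonal (RCLike.ofReal ∘ g ∘ hη.eigenvalues)
  have hcyc : U * Df * star U * A * (U * Dg * star U) * A =
      U * (Df * (star U * A * U) * Dg * (star U * A)) := by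
    simp only [Matrix.mul_assoc]
  rw [hη.cfc_eq, hη.cfc_eq, IsHermitian.cfc, IsHermitian.cfc, Unitary.conjStarAlgAut_apply,
    Unitary.conjStarAlgAut_apply, hcyc, trace_mul_comm, Matrix.mul_assoc _ (star U * A) U,
    trace_diagonal_mul_mul_diagonal_mul]
  simp [inEigenbasis, U, RCLike.real_smul_eq_coe_mul, mul_assoc]

end IsHermitian

namespace PosDef

variable {η : Matrix n n 𝕜}

theorem inv_smul_one_add_eq_cfc (hη : η.PosDef) {u : ℝ} (hu : 0 ≤ u) :
    (u • (1 : Matrix n n 𝕜) + η)⁻¹ = cfc (fun x => (u + x)⁻¹) η := by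
  have hcont := hη.isHermitian.continuousOn_spectrum
  have hsa := hη.isHermitian.isSelfAdjoint
  have hadd : u • (1 : Matrix n n 𝕜) + η = cfc (fun x => u + x) η := by
    rw [cfc_const_add u (fun x => x) η (hcont _) hsa, cfc_id' ℝ η hsa,
      Algebra.algebraMap_eq_smul_one]
  refine inv_eq_left_inv ?_
  rw [hadd, ← cfc_mul _ _ η (hcont _) (hcont _), ← cfc_const_one ℝ η hsa]
  refine cfc_congr fun x hx => inv_mul_cancel₀ ?_
  rw [hη.isHermitian.spectrum_real_eq_range_eigenvalues] at hx
  obtain ⟨i, rfl⟩ := hx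
  exact (add_pos_of_nonneg_of_pos hu (hη.eigenvalues_pos i)).ne'

theorem trace_inv_smul_one_add_mul_mul (hη : η.PosDef) {u : ℝ} (hu : 0 ≤ u)
    (A : Matrix n n 𝕜) :
    ((u • (1 : Matrix n n 𝕜) + η)⁻¹ * A * (u • (1 : Matrix n n 𝕜) + η)⁻¹ * A).trace =
      ∑ i, ∑ j, ((u + hη.isHermitian.eigenvalues i)⁻¹ * (u + hη.isHermitian.eigenvalues j)⁻¹) •
        (hη.isHermitian.inEigenbasis A i j * hη.isHermitian.inEigenbasis A j i) := by
  rw [hη.inv_smul_one_add_eq_cfc hu, hη.isHermitian.trace_cfc_mul_cfc_mul]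

theorem trace_mul_inv_smul_one_add_sq_mul (hη : η.PosDef) {u : ℝ} (hu : 0 ≤ u)
    (A : Matrix n n 𝕜) :
    (η * ((u • (1 : Matrix n n 𝕜) + η)⁻¹ * (u • (1 : Matrix n n 𝕜) + η)⁻¹) * A
        * (u • (1 : Matrix n n 𝕜) + η)⁻¹ * A).trace =
      ∑ i, ∑ j, (hη.isHermitian.eigenvalues i *
          ((u + hη.isHermitian.eigenvalues i)⁻¹ * (u + hη.isHermitian.eigenvalues i)⁻¹) *
          (u + hη.isHermitian.eigenvalues j)⁻¹) •
        (hη.isHermitian.inEigenbasis A i j * hη.isHermitian.inEigenbasis A j i) := by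
  have hcont := hη.isHermitian.continuousOn_spectrum
  have hsq : η * ((u • (1 : Matrix n n 𝕜) + η)⁻¹ * (u • (1 : Matrix n n 𝕜) + η)⁻¹) =
      cfc (fun x => x * ((u + x)⁻¹ * (u + x)⁻¹)) η := by
    rw [cfc_mul _ _ η (hcont _) (hcont _), cfc_mul _ _ η (hcont _) (hcont _),
      cfc_id' ℝ η hη.isHermitian.isSelfAdjoint, hη.inv_smul_one_add_eq_cfc hu]
  rw [hsq, hη.inv_smul_one_add_eq_cfc hu, hη.isHermitian.trace_cfc_mul_cfc_mul]

end PosDef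

end Matrix

section ResolventKernels

variable {a b : ℝ}

theorem integrableOn_Ioi_inv_add_mul_inv_add (ha : 0 < a) (hb : 0 < b) :
    IntegrableOn (fun u : ℝ => (u + a)⁻¹ * (u + b)⁻¹) (Ioi 0) := by
  have hsq : ∀ {c : ℝ}, 0 < c → IntegrableOn (fun u : ℝ => (u + c)⁻¹ ^ 2) (Ioi 0) := fun hc =>
    (integrableOn_add_rpow_Ioi_of_lt (by norm_num : (-2 : ℝ) < -1) (by linarith)).congr_fun
      (fun u hu => by
        simp only
        rw [Real.rpow_neg (by linarith [mem_Ioi.mp hu]), Real.rpow_two, inv_pow])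
      measurableSet_Ioi
  refine ((hsq ha).add (hsq hb)).mono' (by fun_prop) ?_
  refine (ae_restrict_iff' measurableSet_Ioi).2 (ae_of_all _ fun u (hu : 0 < u) => ?_)
  have hua : 0 < (u + a)⁻¹ := inv_pos.2 (add_pos hu ha)
  have hub : 0 < (u + b)⁻¹ := inv_pos.2 (add_pos hu hb)
  rw [Real.norm_of_nonneg (by positivity), Pi.add_apply]
  nlinarith [two_mul_le_add_sq (u + a)⁻¹ (u + b)⁻¹, mul_pos hua hub]

theorem integrableOn_Ioi_mul_inv_add_sq_mul_inv_add (ha : 0 < a) (hb : 0 < b) :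
    IntegrableOn (fun u : ℝ => a * ((u + a)⁻¹ * (u + a)⁻¹) * (u + b)⁻¹) (Ioi 0) := by
  refine (integrableOn_Ioi_inv_add_mul_inv_add ha hb).mono' (by fun_prop) ?_
  refine (ae_restrict_iff' measurableSet_Ioi).2 (ae_of_all _ fun u (hu : 0 < u) => ?_)
  rw [Real.norm_of_nonneg (by positivity)]
  calc a * ((u + a)⁻¹ * (u + a)⁻¹) * (u + b)⁻¹ = a * (u + a)⁻¹ * ((u + a)⁻¹ * (u + b)⁻¹) := by
        ring
    _ ≤ 1 * ((u + a)⁻¹ * (u + b)⁻¹) := by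
        gcongr; exact mul_inv_le_one_of_le₀ (by linarith) (by linarith)
    _ = (u + a)⁻¹ * (u + b)⁻¹ := one_mul _

theorem hasDerivAt_mul_inv_add_mul_inv_add {u : ℝ} (hua : u + a ≠ 0) (hub : u + b ≠ 0) :
    HasDerivAt (fun u => u * ((u + a)⁻¹ * (u + b)⁻¹))
      (a * ((u + a)⁻¹ * (u + a)⁻¹) * (u + b)⁻¹ + b * ((u + b)⁻¹ * (u + b)⁻¹) * (u + a)⁻¹ -
        (u + a)⁻¹ * (u + b)⁻¹) u := by
  refine ((hasDerivAt_id' u).mul ((((hasDerivAt_id' u).add_const a).inv hua).mul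
    (((hasDerivAt_id' u).add_const b).inv hub))).congr_deriv ?_
  simp only [Pi.mul_apply, Pi.inv_apply]
  field_simp
  ring

theorem tendsto_mul_inv_add_mul_inv_add_atTop (ha : 0 < a) (hb : 0 < b) :
    Tendsto (fun u => u * ((u + a)⁻¹ * (u + b)⁻¹)) atTop (𝓝 0) := by
  refine tendsto_of_tendsto_of_tendsto_of_le_of_le' tendsto_const_nhds
    (tendsto_inv_atTop_zero.comp (tendsto_atTop_add_const_right _ b tendsto_id)) ?_ ?_
  all_goals filter_upwards [eventually_ge_atTop 0] with u hu
  · have hua : 0 < u + a := by linarith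
    have hub : 0 < u + b := by linarith
    positivity
  · have hub : 0 < u + b := by linarith
    calc u * ((u + a)⁻¹ * (u + b)⁻¹) = u * (u + a)⁻¹ * (u + b)⁻¹ := (mul_assoc ..).symm
      _ ≤ 1 * (u + b)⁻¹ := by gcongr; exact mul_inv_le_one_of_le₀ (by linarith) (by linarith)
      _ = (u + b)⁻¹ := one_mul _

theorem integral_Ioi_mul_inv_add_sq_mul_inv_add_add_swap (ha : 0 < a) (hb : 0 < b) :
    (∫ u in Ioi 0, a * ((u + a)⁻¹ * (u + a)⁻¹) * (u + b)⁻¹) +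
        ∫ u in Ioi 0, b * ((u + b)⁻¹ * (u + b)⁻¹) * (u + a)⁻¹ =
      ∫ u in Ioi 0, (u + a)⁻¹ * (u + b)⁻¹ := by
  have hf := integrableOn_Ioi_mul_inv_add_sq_mul_inv_add ha hb
  have hf' := integrableOn_Ioi_mul_inv_add_sq_mul_inv_add hb ha
  have hg := integrableOn_Ioi_inv_add_mul_inv_add ha hb
  have hff' : IntegrableOn (fun u => a * ((u + a)⁻¹ * (u + a)⁻¹) * (u + b)⁻¹ +
      b * ((u + b)⁻¹ * (u + b)⁻¹) * (u + a)⁻¹) (Ioi 0) := hf.add hf'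
  have hFTC := integral_Ioi_of_hasDerivAt_of_tendsto'
    (fun u (hu : 0 ≤ u) => hasDerivAt_mul_inv_add_mul_inv_add (by linarith) (by linarith))
    (hff'.sub hg) (tendsto_mul_inv_add_mul_inv_add_atTop ha hb)
  rw [integral_sub hff' hg, integral_add hf hf', zero_mul, sub_zero] at hFTC
  exact sub_eq_zero.mp hFTC

end ResolventKernels

section DoubleSums

variable {ι : Type*} [Fintype ι]

theorem Finset.sum_sum_smul_eq_two_nsmul_of_add_swap {M : Type*} [AddCommMonoid M] [Module ℝ M]
    {c : ι → ι → M} (hc : ∀ i j, c j i = c i j) {F G : ι → ι → ℝ}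
    (hFG : ∀ i j, F i j + F j i = G i j) :
    ∑ i, ∑ j, G i j • c i j = 2 • ∑ i, ∑ j, F i j • c i j := by
  have hswap : ∑ i, ∑ j, F j i • c i j = ∑ i, ∑ j, F i j • c i j := by
    rw [Finset.sum_comm]
    simp only [hc]
  simp only [← hFG, add_smul, Finset.sum_add_distrib, hswap, two_nsmul]

variable {X E : Type*} [MeasurableSpace X] {μ : Measure X} [NormedAddCommGroup E]
  [NormedSpace ℝ E] {k : ι → ι → X → ℝ}

theorem integrable_sum_sum_smul (hk : ∀ i j, Integrable (k i j) μ) (c : ι → ι → E) :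
    Integrable (fun x => ∑ i, ∑ j, k i j x • c i j) μ :=
  integrable_finsetSum _ fun i _ => integrable_finsetSum _ fun j _ => (hk i j).smul_const _

theorem integral_sum_sum_smul [CompleteSpace E] (hk : ∀ i j, Integrable (k i j) μ)
    (c : ι → ι → E) :
    ∫ x, ∑ i, ∑ j, k i j x • c i j ∂μ = ∑ i, ∑ j, (∫ x, k i j x ∂μ) • c i j := by
  rw [integral_finsetSum _ fun i _ => integrable_finsetSum _ fun j _ => (hk i j).smul_const _]
  refine Finset.sum_congr rfl fun i _ => ?_
  rw [integral_finsetSum _ fun j _ => (hk i j).smul_const _]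
  simp only [integral_smul_const]

end DoubleSums

theorem trace_integral_by_parts_general (d : ℕ) (η A : Matrix (Fin d) (Fin d) ℂ)
    (hη : η.PosDef) :
    IntegrableOn
        (fun u : ℝ =>
          ((u • (1 : Matrix (Fin d) (Fin d) ℂ) + η)⁻¹ * A
            * (u • (1 : Matrix (Fin d) (Fin d) ℂ) + η)⁻¹ * A).trace)
        (Set.Ioi (0 : ℝ))
      ∧ IntegrableOn
        (fun u : ℝ =>
          (η * ((u • (1 : Matrix (Fin d) (Fin d) ℂ) + η)⁻¹
              * (u • (1 : Matrix (Fin d) (Fin d) ℂ) + η)⁻¹) * A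
            * (u • (1 : Matrix (Fin d) (Fin d) ℂ) + η)⁻¹ * A).trace)
        (Set.Ioi (0 : ℝ))
      ∧ (∫ u in Set.Ioi (0 : ℝ),
            ((u • (1 : Matrix (Fin d) (Fin d) ℂ) + η)⁻¹ * A
              * (u • (1 : Matrix (Fin d) (Fin d) ℂ) + η)⁻¹ * A).trace)
          - (∫ u in Set.Ioi (0 : ℝ),
              (η * ((u • (1 : Matrix (Fin d) (Fin d) ℂ) + η)⁻¹
                  * (u • (1 : Matrix (Fin d) (Fin d) ℂ) + η)⁻¹) * A
                * (u • (1 : Matrix (Fin d) (Fin d) ℂ) + η)⁻¹ * A).trace)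
        = (1 / 2 : ℂ)
            * ∫ u in Set.Ioi (0 : ℝ),
                ((u • (1 : Matrix (Fin d) (Fin d) ℂ) + η)⁻¹ * A
                  * (u • (1 : Matrix (Fin d) (Fin d) ℂ) + η)⁻¹ * A).trace := by
  have hpos := hη.eigenvalues_pos
  set B := hη.isHermitian.inEigenbasis A
  have hg := fun i j => integrableOn_Ioi_inv_add_mul_inv_add (hpos i) (hpos j)
  have hf := fun i j => integrableOn_Ioi_mul_inv_add_sq_mul_inv_add (hpos i) (hpos j)
  have htr₁ := fun u (hu : u ∈ Ioi (0 : ℝ)) => hη.trace_inv_smul_one_add_mul_mul hu.out.le A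
  have htr₂ := fun u (hu : u ∈ Ioi (0 : ℝ)) => hη.trace_mul_inv_smul_one_add_sq_mul hu.out.le A
  refine ⟨IntegrableOn.congr_fun (integrable_sum_sum_smul hg _)
      (fun u hu => (htr₁ u hu).symm) measurableSet_Ioi,
    IntegrableOn.congr_fun (integrable_sum_sum_smul hf _)
      (fun u hu => (htr₂ u hu).symm) measurableSet_Ioi, ?_⟩
  rw [setIntegral_congr_fun measurableSet_Ioi htr₁, setIntegral_congr_fun measurableSet_Ioi htr₂,
    integral_sum_sum_smul hg, integral_sum_sum_smul hf,
    Finset.sum_sum_smul_eq_two_nsmul_of_add_swap (c := fun i j => B i j * B j i)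
      (fun i j => mul_comm _ _)
      fun i j => integral_Ioi_mul_inv_add_sq_mul_inv_add_add_swap (hpos i) (hpos j),
    two_nsmul]
  ring

/-- Integration-by-parts identity for trace integrals: for a positive definite Hermitian
matrix `η` and a Hermitian matrix `A`,
`∫₀^∞ Tr((u+η)⁻¹A(u+η)⁻¹A) du − ∫₀^∞ Tr(η(u+η)⁻²A(u+η)⁻¹A) du
  = ½ ∫₀^∞ Tr((u+η)⁻¹A(u+η)⁻¹A) du`, and all the integrals converge. -/
theorem trace_integral_by_parts (d : ℕ) (η A : Matrix (Fin d) (Fin d) ℂ)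
    (hη : η.PosDef) (hA : A.IsHermitian) :
    IntegrableOn
        (fun u : ℝ =>
          ((u • (1 : Matrix (Fin d) (Fin d) ℂ) + η)⁻¹ * A
            * (u • (1 : Matrix (Fin d) (Fin d) ℂ) + η)⁻¹ * A).trace)
        (Set.Ioi (0 : ℝ))
      ∧ IntegrableOn
        (fun u : ℝ =>
          (η * ((u • (1 : Matrix (Fin d) (Fin d) ℂ) + η)⁻¹
              * (u • (1 : Matrix (Fin d) (Fin d) ℂ) + η)⁻¹) * A
            * (u • (1 : Matrix (Fin d) (Fin d) ℂ) + η)⁻¹ * A).trace)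
        (Set.Ioi (0 : ℝ))
      ∧ (∫ u in Set.Ioi (0 : ℝ),
            ((u • (1 : Matrix (Fin d) (Fin d) ℂ) + η)⁻¹ * A
              * (u • (1 : Matrix (Fin d) (Fin d) ℂ) + η)⁻¹ * A).trace)
          - (∫ u in Set.Ioi (0 : ℝ),
              (η * ((u • (1 : Matrix (Fin d) (Fin d) ℂ) + η)⁻¹
                  * (u • (1 : Matrix (Fin d) (Fin d) ℂ) + η)⁻¹) * A
                * (u • (1 : Matrix (Fin d) (Fin d) ℂ) + η)⁻¹ * A).trace)
        = (1 / 2 : ℂ)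
            * ∫ u in Set.Ioi (0 : ℝ),
                ((u • (1 : Matrix (Fin d) (Fin d) ℂ) + η)⁻¹ * A
                  * (u • (1 : Matrix (Fin d) (Fin d) ℂ) + η)⁻¹ * A).trace :=
  trace_integral_by_parts_general d η A hη
end

section
/- Let ρ be a positive definite Hermitian matrix in Matrix (Fin d) (Fin d) ℂ and let C ∈ Matrix (Fin d) (Fin d) ℂ commute with ρ (C * ρ = ρ * C). Then ∫₀^∞ Tr( C * ρ * (u•1+ρ)⁻¹ * C * ρ * (u•1+ρ)⁻¹ ) du = Tr( C * C * ρ ), where 1 denotes the identity matrix and the integral is over (0, ∞). -/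
open Matrix MeasureTheory Filter Topology
open scoped ComplexOrder

/-!
As `C` commutes with `ρ`, it commutes with every function of `ρ`, so the integrand is
`Tr(C² f_u(ρ))` with `f_u(λ) = (λ / (u + λ))²`. In an eigenbasis of `ρ` this is
`∑ᵢ wᵢ f_u(λᵢ)`, where `wᵢ` are the diagonal entries of `C²` in that basis, and
`∫₀^∞ (λ / (u + λ))² du = λ` turns it into `∑ᵢ wᵢ λᵢ = Tr(C² ρ)`.
-/

lemma hasDerivAt_neg_sq_div_add {c x : ℝ} (hx : x + c ≠ 0) :
    HasDerivAt (fun u => -c ^ 2 / (u + c)) ((c / (x + c)) ^ 2) x := by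
  refine ((hasDerivAt_const x (-c ^ 2)).fun_div ((hasDerivAt_id' x).add_const c) hx).congr_deriv ?_
  field_simp
  ring

lemma integrableOn_and_integral_Ioi_div_add_sq {c : ℝ} (hc : 0 < c) :
    IntegrableOn (fun u => (c / (u + c)) ^ 2) (Set.Ioi 0) ∧
      ∫ u in Set.Ioi 0, (c / (u + c)) ^ 2 = c := by
  have hderiv : ∀ x ∈ Set.Ici (0 : ℝ),
      HasDerivAt (fun u => -c ^ 2 / (u + c)) ((c / (x + c)) ^ 2) x :=
    fun x hx => hasDerivAt_neg_sq_div_add (by linarith [Set.mem_Ici.mp hx])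
  have hlim : Tendsto (fun u => -c ^ 2 / (u + c)) atTop (𝓝 0) :=
    tendsto_const_nhds.div_atTop (tendsto_atTop_add_const_right _ c tendsto_id)
  refine ⟨integrableOn_Ioi_deriv_of_nonneg' hderiv (fun _ _ => sq_nonneg _) hlim, ?_⟩
  rw [integral_Ioi_of_hasDerivAt_of_nonneg' hderiv (fun _ _ => sq_nonneg _) hlim]
  field_simp
  ring

lemma integral_Ioi_sum_mul_div_add_sq {ι 𝕜 : Type*} [Fintype ι] [RCLike 𝕜] (w : ι → 𝕜)
    {c : ι → ℝ} (hc : ∀ i, 0 < c i) :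
    ∫ u in Set.Ioi 0, ∑ i, w i * (((c i / (u + c i)) ^ 2 : ℝ) : 𝕜) = ∑ i, w i * c i := by
  rw [integral_finsetSum _ fun i _ =>
    ((integrableOn_and_integral_Ioi_div_add_sq (hc i)).1.ofReal.const_mul (w i))]
  refine Finset.sum_congr rfl fun i _ => ?_
  rw [integral_const_mul, integral_ofReal, (integrableOn_and_integral_Ioi_div_add_sq (hc i)).2]

namespace Matrix

variable {n 𝕜 : Type*} [Fintype n] [DecidableEq n] [RCLike 𝕜] {A C : Matrix n n 𝕜}

lemma IsHermitian.trace_mul_cfc (hA : A.IsHermitian) (X : Matrix n n 𝕜) (f : ℝ → ℝ) :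
    (X * cfc f A).trace = ∑ i, (star (hA.eigenvectorUnitary : Matrix n n 𝕜) * X *
      hA.eigenvectorUnitary) i i * f (hA.eigenvalues i) := by
  rw [hA.cfc_eq, IsHermitian.cfc, Unitary.conjStarAlgAut_apply, ← mul_assoc, ← mul_assoc,
    trace_mul_cycle, ← mul_assoc]
  simp [trace, mul_diagonal]

lemma IsHermitian.mul_cfc_mul_cfc_of_commute (hA : A.IsHermitian) (hC : Commute C A)
    (g : ℝ → ℝ) : C * cfc g A * C * cfc g A = C * C * cfc (fun x => g x ^ 2) A := by
  have : IsSelfAdjoint A := hA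
  rw [mul_assoc C, (hC.symm.cfc_real g).eq, cfc_pow g 2 A (A.finite_real_spectrum.continuousOn g)]
  noncomm_ring

lemma PosDef.mul_inv_smul_one_add_eq_cfc (hA : A.PosDef) {u : ℝ} (hu : 0 ≤ u) :
    A * (u • 1 + A)⁻¹ = cfc (fun x => x / (u + x)) A := by
  have : IsSelfAdjoint A := hA.1
  have hne : ∀ x ∈ spectrum ℝ A, u + x ≠ 0 := by
    rw [hA.1.spectrum_real_eq_range_eigenvalues]
    rintro - ⟨i, rfl⟩
    linarith [hA.eigenvalues_pos i]
  have hinv : (u • 1 + A)⁻¹ = cfc (fun x => (u + x)⁻¹) A := by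
    rw [cfc_inv (fun x => u + x) A hne, cfc_const_add u (fun x => x) A, cfc_id' ℝ A,
      Algebra.algebraMap_eq_smul_one, nonsing_inv_eq_ringInverse]
  simp_rw [hinv, div_eq_mul_inv]
  rw [cfc_mul (fun x => x) (fun x => (u + x)⁻¹) A (hg := A.finite_real_spectrum.continuousOn _),
    cfc_id' ℝ A]

lemma PosDef.trace_mul_resolvent_mul_resolvent (hA : A.PosDef) (hC : Commute C A) {u : ℝ}
    (hu : 0 ≤ u) :
    (C * A * (u • 1 + A)⁻¹ * C * A * (u • 1 + A)⁻¹).trace =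
      ∑ i, (star (hA.1.eigenvectorUnitary : Matrix n n 𝕜) * (C * C) *
        hA.1.eigenvectorUnitary) i i *
          (((hA.1.eigenvalues i / (u + hA.1.eigenvalues i)) ^ 2 : ℝ) : 𝕜) := by
  have := hA.1.mul_cfc_mul_cfc_of_commute hC (fun x => x / (u + x))
  simp only [← hA.mul_inv_smul_one_add_eq_cfc hu, ← mul_assoc] at this
  rw [this, hA.1.trace_mul_cfc]

end Matrix

/-- For a positive definite Hermitian matrix `ρ` and a matrix `C` commuting with `ρ`,
`∫₀^∞ Tr(Cρ(u•1+ρ)⁻¹Cρ(u•1+ρ)⁻¹) du = Tr(C²ρ)` (integral over `(0,∞)`). -/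
theorem trace_integral_commuting (d : ℕ) (ρ C : Matrix (Fin d) (Fin d) ℂ)
    (hρ : ρ.PosDef) (hC : C * ρ = ρ * C) :
    (∫ u in Set.Ioi (0 : ℝ),
        (C * ρ * (u • (1 : Matrix (Fin d) (Fin d) ℂ) + ρ)⁻¹
          * C * ρ * (u • (1 : Matrix (Fin d) (Fin d) ℂ) + ρ)⁻¹).trace)
      = (C * C * ρ).trace := by
  rw [setIntegral_congr_fun measurableSet_Ioi fun u hu =>
      hρ.trace_mul_resolvent_mul_resolvent hC (le_of_lt hu),
    integral_Ioi_sum_mul_div_add_sq _ hρ.eigenvalues_pos]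
  conv_rhs => rw [← cfc_id' ℝ ρ hρ.1.isSelfAdjoint, hρ.1.trace_mul_cfc]
end
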